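/- arXiv:1909.06653 — 5 statements merged into one kernel-verified Lean document; each statement's English description precedes it below -/
import Mathlib

section
/- Let (V,d) be a metric space and let J_r, J_{r+1} ⊆ V be sets such that: (Covering) for every j ∈ J_r there exists j' ∈ J_{r+1} with d(j,j') ≤ c₁·5^(r+1), and (Separating) any two distinct points of J_{r+1} are at distance > c₁·5^(r+1). If the metric space has doubling dimension κ, then for each j' ∈ J_{r+1}, the set of points j ∈ J_r whose closest point in J_{r+1} is j' and that satisfy d(j,j') ≤ c₁·5^(r+1) is contained in a ball of radius (4/5)·c₂·5^(r+1) around j' (where c₂ = 35 and c₁ = 20), and since these points are pairwise at distance > c₁·5^r, there are at most 2^(4κ) of them. -/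
open Metric

theorem cover_aux {V : Type*} [MetricSpace V] (κ : ℕ)
    (hdbl : ∀ (x : V) (R : ℝ), ∃ T : Finset V, T.card ≤ 2 ^ κ ∧
      Metric.closedBall x R ⊆ ⋃ y ∈ T, Metric.closedBall y (R / 2))
    (n : ℕ) (x : V) (R : ℝ) :
    ∃ T : Finset V, T.card ≤ 2 ^ (n * κ) ∧
      closedBall x R ⊆ ⋃ y ∈ T, closedBall y (R / 2 ^ n) := by
  classical
  induction n with
  | zero => exact ⟨{x}, by simp, by simp⟩
  | succ n ih =>
    obtain ⟨T, hT, hcov⟩ := ih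
    choose f hf1 hf2 using fun y : V => hdbl y (R / 2 ^ n)
    refine ⟨T.biUnion f, ?_, ?_⟩
    · calc (T.biUnion f).card ≤ ∑ y ∈ T, (f y).card := Finset.card_biUnion_le
        _ ≤ T.card * 2 ^ κ := Finset.sum_le_card_nsmul _ _ _ (fun y _ => hf1 y)
        _ ≤ 2 ^ (n * κ) * 2 ^ κ := by gcongr
        _ = 2 ^ ((n + 1) * κ) := by rw [add_mul, one_mul, pow_add]
    · intro z hz
      have hz' := hcov hz
      simp only [Set.mem_iUnion, exists_prop] at hz'
      obtain ⟨y, hy, hzy⟩ := hz'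
      have := hf2 y hzy
      simp only [Set.mem_iUnion, exists_prop] at this ⊢
      obtain ⟨w, hw, hzw⟩ := this
      refine ⟨w, Finset.mem_biUnion.2 ⟨y, hy, hw⟩, ?_⟩
      have h : R / 2 ^ n / 2 = R / 2 ^ (n + 1) := by ring
      rwa [h] at hzw

theorem pack_aux {V : Type*} [MetricSpace V] (S : Set V) (T : Finset V) (ρ : ℝ)
    (hcov : S ⊆ ⋃ y ∈ T, closedBall y ρ)
    (hsep : ∀ a ∈ S, ∀ b ∈ S, a ≠ b → 2 * ρ < dist a b) :
    S.Finite ∧ S.ncard ≤ T.card := by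
  classical
  have h : ∀ a : V, ∃ y, a ∈ S → y ∈ T ∧ dist a y ≤ ρ := by
    intro a
    by_cases ha : a ∈ S
    · have := hcov ha
      simp only [Set.mem_iUnion, exists_prop] at this
      obtain ⟨y, hy, hay⟩ := this
      exact ⟨y, fun _ => ⟨hy, hay⟩⟩
    · exact ⟨a, fun h => absurd h ha⟩
  choose g hg using h
  have hinj : Set.InjOn g S := by
    intro a ha b hb hab
    by_contra hne
    have h1 := (hg a ha).2
    have h2 := (hg b hb).2
    have := hsep a ha b hb hne
    have hd : dist a b ≤ dist a (g a) + dist (g b) b := by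
      rw [hab]; exact dist_triangle a (g b) b
    rw [dist_comm (g b) b] at hd
    linarith
  have himg : g '' S ⊆ (T : Set V) := by
    rintro _ ⟨a, ha, rfl⟩
    exact (hg a ha).1
  have hfin : S.Finite :=
    Set.Finite.of_finite_image ((T.finite_toSet).subset himg) hinj
  refine ⟨hfin, ?_⟩
  calc S.ncard = (g '' S).ncard := (Set.ncard_image_of_injOn hinj).symm
    _ ≤ (T : Set V).ncard := Set.ncard_le_ncard himg T.finite_toSet
    _ = T.card := Set.ncard_coe_finset T

/-- bound on the number of children of a node in the hierarchy. -/
theorem stmt_2 {V : Type*} [MetricSpace V] (κ : ℕ)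
    (hdbl : ∀ (x : V) (R : ℝ), ∃ T : Finset V, T.card ≤ 2 ^ κ ∧
      Metric.closedBall x R ⊆ ⋃ y ∈ T, Metric.closedBall y (R / 2))
    (c₁ c₂ : ℝ) (hc₁ : c₁ = 20) (hc₂ : c₂ = 35)
    (Jr Jr1 : Set V) (r : ℤ)
    (hcov : ∀ j ∈ Jr, ∃ j' ∈ Jr1, dist j j' ≤ c₁ * (5 : ℝ) ^ (r + 1))
    (hsep1 : ∀ j ∈ Jr1, ∀ j'' ∈ Jr1, j ≠ j'' → c₁ * (5 : ℝ) ^ (r + 1) < dist j j'')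
    (hsep : ∀ j ∈ Jr, ∀ j'' ∈ Jr, j ≠ j'' → c₁ * (5 : ℝ) ^ r < dist j j'')
    (j' : V) (hj' : j' ∈ Jr1) :
    ({j ∈ Jr | (∀ j'' ∈ Jr1, dist j j' ≤ dist j j'') ∧
        dist j j' ≤ c₁ * (5 : ℝ) ^ (r + 1)} ⊆
      Metric.closedBall j' ((4 / 5) * c₂ * (5 : ℝ) ^ (r + 1))) ∧
    {j ∈ Jr | (∀ j'' ∈ Jr1, dist j j' ≤ dist j j'') ∧
        dist j j' ≤ c₁ * (5 : ℝ) ^ (r + 1)}.Finite ∧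
    {j ∈ Jr | (∀ j'' ∈ Jr1, dist j j' ≤ dist j j'') ∧
        dist j j' ≤ c₁ * (5 : ℝ) ^ (r + 1)}.ncard ≤ 2 ^ (4 * κ) := by
  have hp : (0 : ℝ) < (5 : ℝ) ^ r := by positivity
  have h5 : (5 : ℝ) ^ (r + 1) = 5 * (5 : ℝ) ^ r := by
    rw [zpow_add_one₀ (by norm_num : (5:ℝ) ≠ 0)]; ring
  set S := {j ∈ Jr | (∀ j'' ∈ Jr1, dist j j' ≤ dist j j'') ∧
      dist j j' ≤ c₁ * (5 : ℝ) ^ (r + 1)} with hS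
  have hsub : S ⊆ Metric.closedBall j' ((4 / 5) * c₂ * (5 : ℝ) ^ (r + 1)) := by
    intro j hj
    obtain ⟨hjJr, hmin, hd⟩ := hj
    rw [Metric.mem_closedBall]
    calc dist j j' ≤ c₁ * (5 : ℝ) ^ (r + 1) := hd
      _ ≤ (4 / 5) * c₂ * (5 : ℝ) ^ (r + 1) := by
          rw [hc₁, hc₂]; nlinarith
  obtain ⟨T, hT, hTcov⟩ := cover_aux κ hdbl 4 j' ((4 / 5) * c₂ * (5 : ℝ) ^ (r + 1))
  have hSball : S ⊆ ⋃ y ∈ T, closedBall y ((4 / 5) * c₂ * (5 : ℝ) ^ (r + 1) / 2 ^ 4) :=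
    fun j hj => hTcov (hsub hj)
  have hSsep : ∀ a ∈ S, ∀ b ∈ S, a ≠ b →
      2 * ((4 / 5) * c₂ * (5 : ℝ) ^ (r + 1) / 2 ^ 4) < dist a b := by
    intro a ha b hb hne
    have := hsep a ha.1 b hb.1 hne
    rw [hc₂]
    rw [hc₁] at this
    nlinarith
  obtain ⟨hfin, hcard⟩ := pack_aux S T _ hSball hSsep
  exact ⟨hsub, hfin, hcard.trans hT⟩
end

section
/- Let c₁ = 20, c₂ = 35, c_Y = 249. Suppose the tree T on pairs ⟨j,r⟩ satisfies: if ⟨j',r+1⟩ is the parent of ⟨j,r⟩ then d(j,j') ≤ c₁·5^(r+1), and areas are nested along the tree (A(j,r) ⊆ A(j',r+1) when ⟨j',r+1⟩ is the parent of ⟨j,r⟩). Define Y(j,r) = ⋃{A(j'',r) : j'' ∈ J_r, d(j,j'') ≤ c_Y·5^r}. Then for any node ⟨j,r⟩ with parent ⟨j',r+1⟩, we have Y(j,r) ⊆ Y(j',r+1); consequently if ⟨j',r'⟩ is any ancestor of ⟨j,r⟩ in T then Y(j,r) ⊆ Y(j',r'). -/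
open Set

lemma biUnion_ball_subset_of_moves {V α : Type*} [PseudoMetricSpace V]
    {J J' : Set V} {A A' : V → Set α} {p : V → V} {j : V} {ρ ρ' δ : ℝ}
    (hp : ∀ i ∈ J, p i ∈ J' ∧ dist i (p i) ≤ δ ∧ A i ⊆ A' (p i))
    (hj : dist j (p j) ≤ δ) (hρ : δ + ρ + δ ≤ ρ') :
    (⋃ i ∈ {i ∈ J | dist j i ≤ ρ}, A i) ⊆ ⋃ i ∈ {i ∈ J' | dist (p j) i ≤ ρ'}, A' i := by
  refine iUnion₂_subset fun i ⟨hiJ, hji⟩ => ?_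
  obtain ⟨hpi, hdi, hAi⟩ := hp i hiJ
  refine hAi.trans (subset_biUnion_of_mem (u := A') ⟨hpi, ?_⟩)
  calc dist (p j) (p i) ≤ dist (p j) j + dist j i + dist i (p i) := dist_triangle4 _ _ _ _
    _ ≤ δ + ρ + δ := by rw [dist_comm] at hj; gcongr
    _ ≤ ρ' := hρ

lemma scale_step_le {c₁ cY : ℝ} (h : 10 * c₁ ≤ 4 * cY) (r : ℤ) :
    c₁ * (5 : ℝ) ^ (r + 1) + cY * (5 : ℝ) ^ r + c₁ * (5 : ℝ) ^ (r + 1) ≤ cY * (5 : ℝ) ^ (r + 1) := by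
  have h5 : (0 : ℝ) < 5 ^ r := by positivity
  rw [zpow_add_one₀ (by norm_num)]
  nlinarith

lemma mem_of_parent_chain {V : Type*} {J : ℤ → Set V} {parent : V → ℤ → V}
    (hmem : ∀ r : ℤ, ∀ j ∈ J r, parent j r ∈ J (r + 1))
    {r : ℤ} {anc : ℕ → V} (h0 : anc 0 ∈ J r)
    (hsucc : ∀ k : ℕ, anc (k + 1) = parent (anc k) (r + k)) (k : ℕ) :
    anc k ∈ J (r + k) := by
  induction k with
  | zero => simpa using h0
  | succ k ih =>
    rw [hsucc, Nat.cast_succ, ← add_assoc]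
    exact hmem _ _ ih

section Tree

/-- The paper's `Y(j, r)` is `scaledBallUnion J A c_Y j r`. -/
def scaledBallUnion {V : Type*} [PseudoMetricSpace V] (J : ℤ → Set V) (A : V → ℤ → Set V) (c : ℝ)
    (j : V) (r : ℤ) : Set V :=
  ⋃ i ∈ {i ∈ J r | dist j i ≤ c * (5 : ℝ) ^ r}, A i r

def IsParentMap {V : Type*} [PseudoMetricSpace V] (J : ℤ → Set V) (A : V → ℤ → Set V)
    (parent : V → ℤ → V) (c₁ : ℝ) : Prop :=
  ∀ r : ℤ, ∀ j ∈ J r, parent j r ∈ J (r + 1) ∧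
    dist j (parent j r) ≤ c₁ * (5 : ℝ) ^ (r + 1) ∧ A j r ⊆ A (parent j r) (r + 1)

variable {V : Type*} [PseudoMetricSpace V] {J : ℤ → Set V} {A : V → ℤ → Set V} {parent : V → ℤ → V}
  {c₁ cY : ℝ}

lemma scaledBallUnion_subset_parent (hc : 10 * c₁ ≤ 4 * cY)
    (hparent : IsParentMap J A parent c₁)
    {r : ℤ} {j : V} (hj : j ∈ J r) :
    scaledBallUnion J A cY j r ⊆ scaledBallUnion J A cY (parent j r) (r + 1) :=
  biUnion_ball_subset_of_moves (A := (A · r)) (A' := (A · (r + 1))) (p := (parent · r))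
    (hparent r) (hparent r j hj).2.1 (scale_step_le hc r)

lemma scaledBallUnion_subset_ancestor (hc : 10 * c₁ ≤ 4 * cY)
    (hparent : IsParentMap J A parent c₁)
    {r : ℤ} {anc : ℕ → V} (h0 : anc 0 ∈ J r)
    (hsucc : ∀ k : ℕ, anc (k + 1) = parent (anc k) (r + k)) (k : ℕ) :
    scaledBallUnion J A cY (anc 0) r ⊆ scaledBallUnion J A cY (anc k) (r + k) := by
  have hmono : Monotone fun k : ℕ => scaledBallUnion J A cY (anc k) (r + k) := by
    refine monotone_nat_of_le_succ fun k => ?_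
    have hk := mem_of_parent_chain (fun r j hj => (hparent r j hj).1) h0 hsucc k
    simpa only [hsucc, Nat.cast_succ, ← add_assoc] using
      scaledBallUnion_subset_parent hc hparent hk
  simpa using hmono (Nat.zero_le k)

end Tree

theorem stmt_8_general {V : Type*} [MetricSpace V]
    (c₁ cY : ℝ) (hc₁ : c₁ = 20) (hcY : cY = 249)
    (J : ℤ → Set V) (A : V → ℤ → Set V) (parent : V → ℤ → V)
    -- parent properties: membership, distance bound, area nesting
    (hparent : ∀ (r : ℤ), ∀ j ∈ J r,
      parent j r ∈ J (r + 1) ∧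
      dist j (parent j r) ≤ c₁ * (5 : ℝ) ^ (r + 1) ∧
      A j r ⊆ A (parent j r) (r + 1)) :
    -- define Y(j,r) = ⋃ {A(j'',r) : j'' ∈ J r, d(j,j'') ≤ cY·5^r}; then
    (∀ (r : ℤ), ∀ j ∈ J r,
      (⋃ j'' ∈ {j'' ∈ J r | dist j j'' ≤ cY * (5 : ℝ) ^ r}, A j'' r) ⊆
        ⋃ j'' ∈ {j'' ∈ J (r + 1) |
          dist (parent j r) j'' ≤ cY * (5 : ℝ) ^ (r + 1)}, A j'' (r + 1)) ∧
    -- ancestor version: anc is the chain of iterated parents starting from j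
    (∀ (r : ℤ), ∀ j ∈ J r, ∀ anc : ℕ → V, anc 0 = j →
      (∀ k : ℕ, anc (k + 1) = parent (anc k) (r + k)) →
      ∀ k : ℕ,
        (⋃ j'' ∈ {j'' ∈ J r | dist j j'' ≤ cY * (5 : ℝ) ^ r}, A j'' r) ⊆
          ⋃ j'' ∈ {j'' ∈ J (r + k) |
            dist (anc k) j'' ≤ cY * (5 : ℝ) ^ (r + k)}, A j'' (r + k)) := by
  have hc : 10 * c₁ ≤ 4 * cY := by norm_num [hc₁, hcY]
  refine ⟨fun r j hj => scaledBallUnion_subset_parent hc hparent hj, ?_⟩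
  rintro r j hj anc rfl hsucc k
  exact scaledBallUnion_subset_ancestor hc hparent hj hsucc k

/-- `Y` of a node is contained in `Y` of its parent, and hence in
`Y` of any ancestor. `parent j r` is the center of the parent (at level `r+1`)
of the node `⟨j,r⟩`. -/
theorem stmt_8 {V : Type*} [MetricSpace V]
    (c₁ c₂ cY : ℝ) (hc₁ : c₁ = 20) (hc₂ : c₂ = 35) (hcY : cY = 249)
    (J : ℤ → Set V) (A : V → ℤ → Set V) (parent : V → ℤ → V)
    -- parent properties: membership, distance bound, area nesting
    (hparent : ∀ (r : ℤ), ∀ j ∈ J r,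
      parent j r ∈ J (r + 1) ∧
      dist j (parent j r) ≤ c₁ * (5 : ℝ) ^ (r + 1) ∧
      A j r ⊆ A (parent j r) (r + 1)) :
    -- define Y(j,r) = ⋃ {A(j'',r) : j'' ∈ J r, d(j,j'') ≤ cY·5^r}; then
    (∀ (r : ℤ), ∀ j ∈ J r,
      (⋃ j'' ∈ {j'' ∈ J r | dist j j'' ≤ cY * (5 : ℝ) ^ r}, A j'' r) ⊆
        ⋃ j'' ∈ {j'' ∈ J (r + 1) |
          dist (parent j r) j'' ≤ cY * (5 : ℝ) ^ (r + 1)}, A j'' (r + 1)) ∧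
    -- ancestor version: anc is the chain of iterated parents starting from j
    (∀ (r : ℤ), ∀ j ∈ J r, ∀ anc : ℕ → V, anc 0 = j →
      (∀ k : ℕ, anc (k + 1) = parent (anc k) (r + k)) →
      ∀ k : ℕ,
        (⋃ j'' ∈ {j'' ∈ J r | dist j j'' ≤ cY * (5 : ℝ) ^ r}, A j'' r) ⊆
          ⋃ j'' ∈ {j'' ∈ J (r + k) |
            dist (anc k) j'' ≤ cY * (5 : ℝ) ^ (r + k)}, A j'' (r + k)) :=
  stmt_8_general c₁ cY hc₁ hcY J A parent hparent
end

section
/- Let c₃ = 107, c_Y = 249, c₁ = 20. Suppose triplets ⟨j,r,s⟩ (facility, logradius, color) satisfy: (a) X(j,r) ⊆ B(j, c₃·5^r); (b) for every open triplet ⟨j,r,s⟩ and every triplet ⟨j',r',s'⟩ with (r',s') lexicographically smaller than (r,s), if j' ∈ Y(j,r) then ⟨j',r',s'⟩ is not open; (c) same-logradius triplets whose centers are within distance c₄·5^r = 284·5^r have distinct colors; (d) if ⟨j',r'⟩ has an ancestor ⟨j'',r⟩ at level r in the hierarchy tree (where parents are at distance ≤ c₁·5^(r+1), so d(j'',j')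 ≤ (5/4)c₁·5^r), then A(j',r') ⊆ A(j'',r) ⊆ Y(j,r) whenever d(j,j'') ≤ c_Y·5^r; and all centers lie in their own areas. Then no point i belongs to X(j,r) and X(j',r') for two distinct open triplets ⟨j,r,s⟩ and ⟨j',r',s'⟩. -/
/-- each point belongs to `X(j,r)` for at most one open triplet. -/
theorem stmt_10 {V : Type*} [MetricSpace V]
    (c₁ c₃ c₄ cY : ℝ) (hc₁ : c₁ = 20) (hc₃ : c₃ = 107) (hc₄ : c₄ = 284)
    (hcY : cY = 249)
    (T : Set (V × ℤ × ℕ)) (Open : V → ℤ → ℕ → Prop)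
    (X Y A : V → ℤ → Set V)
    (hOpenT : ∀ j r s, Open j r s → (j, r, s) ∈ T)
    -- (a) X(j,r) ⊆ B(j, c₃·5^r)
    (ha : ∀ (j : V) (r : ℤ), X j r ⊆ Metric.closedBall j (c₃ * (5 : ℝ) ^ r))
    -- (b) no open triplet has a lex-smaller open triplet with center in its Y
    (hb : ∀ j r s, Open j r s → ∀ j' r' s',
      (r' < r ∨ (r' = r ∧ s' < s)) → j' ∈ Y j r → ¬ Open j' r' s')
    -- (c) same-logradius triplets with centers within c₄·5^r have distinct colors
    (hc : ∀ j r s j' s', (j, r, s) ∈ T → (j', r, s') ∈ T → j ≠ j' →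
      dist j j' ≤ c₄ * (5 : ℝ) ^ r → s ≠ s')
    -- (d) level-r ancestors: for a triplet at level r' < r there is an ancestor
    -- center j'' at level r with d(j'',j') ≤ (5/4)·c₁·5^r and A(j',r') ⊆ A(j'',r)
    (hd : ∀ j' r' s' (r : ℤ), (j', r', s') ∈ T → r' < r →
      ∃ j'' : V, dist j'' j' ≤ (5 / 4) * c₁ * (5 : ℝ) ^ r ∧ A j' r' ⊆ A j'' r)
    -- (e) A(j'',r) ⊆ Y(j,r) whenever d(j,j'') ≤ cY·5^r, and centers lie in
    -- their own areas
    (he : ∀ (j j'' : V) (r : ℤ), dist j j'' ≤ cY * (5 : ℝ) ^ r → A j'' r ⊆ Y j r)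
    (hcenter : ∀ (j' : V) (r' : ℤ), j' ∈ A j' r') :
    ∀ (i : V) (j : V) (r : ℤ) (s : ℕ) (j' : V) (r' : ℤ) (s' : ℕ),
      Open j r s → Open j' r' s' → (j, r, s) ≠ (j', r', s') →
      ¬ (i ∈ X j r ∧ i ∈ X j' r') := by
  have h5 : ∀ t : ℤ, (0:ℝ) < (5 : ℝ) ^ t := fun t => zpow_pos (by norm_num) t
  intro i j r s j' r' s' hO hO' hne hmem
  obtain ⟨hi, hi'⟩ := hmem
  have key : ∀ (j : V) (r : ℤ) (s : ℕ) (j' : V) (r' : ℤ) (s' : ℕ),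
      Open j r s → Open j' r' s' → r' < r → i ∈ X j r → i ∈ X j' r' → False := by
    intro j r s j' r' s' hO hO' hlt hi hi'
    have hd1 := ha j r hi
    have hd2 := ha j' r' hi'
    rw [Metric.mem_closedBall] at hd1 hd2
    have hjj' : dist j j' ≤ c₃ * (5:ℝ)^r + c₃ * (5:ℝ)^r' := by
      calc dist j j' ≤ dist j i + dist i j' := dist_triangle _ _ _
        _ ≤ _ := by
            rw [dist_comm j i]; exact add_le_add hd1 hd2
    obtain ⟨j'', hjj'', hA⟩ := hd j' r' s' r (hOpenT _ _ _ hO') hlt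
    have h5le : (5:ℝ)^r' ≤ (5:ℝ)^r := by
      apply zpow_le_zpow_right₀ (by norm_num) hlt.le
    have hY : dist j j'' ≤ cY * (5:ℝ)^r := by
      calc dist j j'' ≤ dist j j' + dist j' j'' := dist_triangle _ _ _
        _ ≤ (c₃ * (5:ℝ)^r + c₃ * (5:ℝ)^r') + (5/4) * c₁ * (5:ℝ)^r := by
            rw [dist_comm j' j'']; exact add_le_add hjj' hjj''
        _ ≤ cY * (5:ℝ)^r := by
            subst hc₁ hc₃ hcY; nlinarith [h5 r, h5 r']
    exact hb j r s hO j' r' s' (Or.inl hlt) (he j j'' r hY (hA (hcenter j' r'))) hO'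
  rcases lt_trichotomy r' r with hlt | heq | hlt
  · exact key j r s j' r' s' hO hO' hlt hi hi'
  · subst heq
    have hd1 := ha j r' hi
    have hd2 := ha j' r' hi'
    rw [Metric.mem_closedBall] at hd1 hd2
    have hjj' : dist j j' ≤ 2 * c₃ * (5:ℝ)^r' := by
      calc dist j j' ≤ dist j i + dist i j' := dist_triangle _ _ _
        _ ≤ c₃ * (5:ℝ)^r' + c₃ * (5:ℝ)^r' := by
            rw [dist_comm j i]; exact add_le_add hd1 hd2
        _ = 2 * c₃ * (5:ℝ)^r' := by ring
    have hY : j' ∈ Y j r' := by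
      refine he j j' r' ?_ (hcenter j' r')
      refine hjj'.trans ?_
      subst hc₃ hcY; nlinarith [h5 r']
    have hY' : j ∈ Y j' r' := by
      refine he j' j r' ?_ (hcenter j r')
      rw [dist_comm]
      refine hjj'.trans ?_
      subst hc₃ hcY; nlinarith [h5 r']
    rcases lt_trichotomy s s' with hs | hs | hs
    · exact hb j' r' s' hO' j r' s (Or.inr ⟨rfl, hs⟩) hY' hO
    · subst hs
      by_cases hj : j = j'
      · exact hne (by rw [hj])
      · exact hc j r' s j' s (hOpenT _ _ _ hO) (hOpenT _ _ _ hO') hj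
          (hjj'.trans (by subst hc₃ hc₄; nlinarith [h5 r'])) rfl
    · exact hb j r' s hO j' r' s' (Or.inr ⟨rfl, hs⟩) hY hO'
  · exact key j' r' s' j r s hO' hO hlt hi' hi
end

section
/- Suppose each client i ∈ C is assigned a logradius r_i^area and a facility j_i^open satisfying d(i, j_i^open) ≤ (c₂ + c₃ + c₄)·5^{r_i^area}, where c₂ = 35, c₃ = 107, c₄ = 284. Suppose further that each open triplet ⟨j,r,s⟩ satisfies the abundance condition 5^r·|C ∩ X(j,r)| ≥ f*_{⟨j,r⟩} and that each client belongs to X(j,r) for at most one open triplet, with r_i^area = r whenever i ∈ X(j,r) for an open ⟨j,r,s⟩. Then the total cost satisfies Σ_{i∈C} d(i, j_i^open) + Σ_{j ∈ I_C} f_j ≤ Σ_{i∈C} (c₂+c₃+c₄+1)·5^{r_i^area}, where I_C is the set of opened designated facilities and f*_{⟨j,r⟩} ≥ f_{j*_{⟨j,r⟩}} is the cost of the designated facility of ⟨j,r⟩. -/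
/-!
The facility cost of an open triplet `⟨j, r, s⟩` is at most `f*_{⟨j,r⟩} ≤ 5^r · |C ∩ X(j,r)|`,
which we charge to the clients of `C ∩ X(j,r)`, each paying `5^r = 5^{r_i^area}`. These sets are
disjoint, so every client pays at most once, and the facility cost is at most `Σ_i 5^{r_i^area}`.
The connection cost is bounded client by client.
-/

open Finset

section Abundance

variable {ι α : Type*} {C : Finset α} {T : Finset ι} {S : ι → Set α} {w : α → ℝ}

open scoped Classical in
lemma sum_sum_filter_mem_le_sum (hw : ∀ i ∈ C, 0 ≤ w i)
    (hdisj : ∀ i ∈ C, ∀ t ∈ T, ∀ t' ∈ T, i ∈ S t → i ∈ S t' → t = t') :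
    ∑ t ∈ T, ∑ i ∈ C with i ∈ S t, w i ≤ ∑ i ∈ C, w i := by
  rw [← sum_biUnion]
  · refine sum_le_sum_of_subset_of_nonneg (fun i hi => ?_) fun i hi _ => hw i hi
    obtain ⟨_, _, hi⟩ := mem_biUnion.mp hi
    exact (mem_filter.mp hi).1
  · intro t ht t' ht' hne
    simp only [Function.onFun, disjoint_left, mem_filter]
    exact fun i ⟨hiC, hit⟩ ⟨_, hit'⟩ => hne (hdisj i hiC t ht t' ht' hit hit')

open scoped Classical in
lemma le_sum_filter_mem_of_le_mul_ncard {g a : ℝ} {s : Set α}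
    (hg : g ≤ a * ((C : Set α) ∩ s).ncard) (hw : ∀ i ∈ C, i ∈ s → w i = a) :
    g ≤ ∑ i ∈ C with i ∈ s, w i := by
  have hcard : ((C : Set α) ∩ s).ncard = #{i ∈ C | i ∈ s} := by
    rw [← Set.ncard_coe_finset, coe_filter]; rfl
  rw [sum_congr rfl fun i hi => hw i (mem_filter.mp hi).1 (mem_filter.mp hi).2, sum_const,
    nsmul_eq_mul, ← hcard, mul_comm]
  exact hg

lemma sum_le_sum_of_le_mul_ncard_inter {g a : ι → ℝ} (hw : ∀ i ∈ C, 0 ≤ w i)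
    (hg : ∀ t ∈ T, g t ≤ a t * ((C : Set α) ∩ S t).ncard)
    (hdisj : ∀ i ∈ C, ∀ t ∈ T, ∀ t' ∈ T, i ∈ S t → i ∈ S t' → t = t')
    (hwa : ∀ i ∈ C, ∀ t ∈ T, i ∈ S t → w i = a t) :
    ∑ t ∈ T, g t ≤ ∑ i ∈ C, w i := by
  classical
  calc ∑ t ∈ T, g t ≤ ∑ t ∈ T, ∑ i ∈ C with i ∈ S t, w i :=
        sum_le_sum fun t ht => le_sum_filter_mem_of_le_mul_ncard (hg t ht)
          fun i hi hit => hwa i hi t ht hit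
    _ ≤ ∑ i ∈ C, w i := sum_sum_filter_mem_le_sum hw hdisj

end Abundance

theorem stmt_11_general {V : Type*} [MetricSpace V] [DecidableEq V]
    (c₂ c₃ c₄ : ℝ)
    (C : Finset V) (OpenT : Finset (V × ℤ × ℕ))
    (X : V → ℤ → Set V) (rarea : V → ℤ) (jopen : V → V)
    (fstar : V → ℤ → ℝ) (dstar : V → ℤ → V) (f : V → ℝ)
    (hfnn : ∀ j, 0 ≤ f j)
    -- designated facility cost
    (hdes : ∀ (j : V) (r : ℤ), f (dstar j r) ≤ fstar j r)
    -- distance bound for each client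
    (hdist : ∀ i ∈ C, dist i (jopen i) ≤ (c₂ + c₃ + c₄) * (5 : ℝ) ^ (rarea i))
    -- abundance condition for each open triplet
    (habund : ∀ t ∈ OpenT,
      fstar t.1 t.2.1 ≤ (5 : ℝ) ^ t.2.1 * ((↑C ∩ X t.1 t.2.1).ncard : ℝ))
    -- each client lies in X of at most one open triplet
    (hone : ∀ i ∈ C, ∀ t ∈ OpenT, ∀ t' ∈ OpenT,
      i ∈ X t.1 t.2.1 → i ∈ X t'.1 t'.2.1 → t = t')
    -- r_i^area matches the logradius of the open triplet whose X contains i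
    (hr : ∀ i ∈ C, ∀ t ∈ OpenT, i ∈ X t.1 t.2.1 → rarea i = t.2.1) :
    ∑ i ∈ C, dist i (jopen i) +
      ∑ j ∈ OpenT.image (fun t => dstar t.1 t.2.1), f j ≤
    ∑ i ∈ C, (c₂ + c₃ + c₄ + 1) * (5 : ℝ) ^ (rarea i) := by
  have hfacility : ∑ j ∈ OpenT.image (fun t => dstar t.1 t.2.1), f j ≤
      ∑ i ∈ C, (5 : ℝ) ^ rarea i :=
    (sum_image_le_of_nonneg fun j _ => hfnn j).trans <|
      sum_le_sum_of_le_mul_ncard_inter (a := fun t => (5 : ℝ) ^ t.2.1)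
        (fun i _ => by positivity) (fun t ht => (hdes _ _).trans (habund t ht)) hone
        fun i hi t ht hit => by rw [hr i hi t ht hit]
  calc ∑ i ∈ C, dist i (jopen i) + ∑ j ∈ OpenT.image (fun t => dstar t.1 t.2.1), f j
      ≤ ∑ i ∈ C, (c₂ + c₃ + c₄) * (5 : ℝ) ^ rarea i + ∑ i ∈ C, (5 : ℝ) ^ rarea i :=
        add_le_add (sum_le_sum hdist) hfacility
    _ = ∑ i ∈ C, (c₂ + c₃ + c₄ + 1) * (5 : ℝ) ^ rarea i := by
        rw [← sum_add_distrib]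
        exact sum_congr rfl fun i _ => by ring

/-- total cost bound `Σ d(i,j_i^open) + Σ_{j ∈ I_C} f_j ≤
Σ_i (c₂+c₃+c₄+1)·5^{r_i^area}`. -/
theorem stmt_11 {V : Type*} [MetricSpace V] [DecidableEq V]
    (c₂ c₃ c₄ : ℝ) (hc₂ : c₂ = 35) (hc₃ : c₃ = 107) (hc₄ : c₄ = 284)
    (C : Finset V) (OpenT : Finset (V × ℤ × ℕ))
    (X : V → ℤ → Set V) (rarea : V → ℤ) (jopen : V → V)
    (fstar : V → ℤ → ℝ) (dstar : V → ℤ → V) (f : V → ℝ)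
    (hfnn : ∀ j, 0 ≤ f j)
    -- designated facility cost
    (hdes : ∀ (j : V) (r : ℤ), f (dstar j r) ≤ fstar j r)
    -- distance bound for each client
    (hdist : ∀ i ∈ C, dist i (jopen i) ≤ (c₂ + c₃ + c₄) * (5 : ℝ) ^ (rarea i))
    -- abundance condition for each open triplet
    (habund : ∀ t ∈ OpenT,
      fstar t.1 t.2.1 ≤ (5 : ℝ) ^ t.2.1 * ((↑C ∩ X t.1 t.2.1).ncard : ℝ))
    -- each client lies in X of at most one open triplet
    (hone : ∀ i ∈ C, ∀ t ∈ OpenT, ∀ t' ∈ OpenT,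
      i ∈ X t.1 t.2.1 → i ∈ X t'.1 t'.2.1 → t = t')
    -- r_i^area matches the logradius of the open triplet whose X contains i
    (hr : ∀ i ∈ C, ∀ t ∈ OpenT, i ∈ X t.1 t.2.1 → rarea i = t.2.1) :
    ∑ i ∈ C, dist i (jopen i) +
      ∑ j ∈ OpenT.image (fun t => dstar t.1 t.2.1), f j ≤
    ∑ i ∈ C, (c₂ + c₃ + c₄ + 1) * (5 : ℝ) ^ (rarea i) :=
  stmt_11_general c₂ c₃ c₄ C OpenT X rarea jopen fstar dstar f hfnn hdes hdist habund hone hr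
end

section
/- Let S ⊆ V be finite, let each j ∈ S have an opening cost f_j > 0, and for each j let r_j be a logradius with 5^{r_j}·|C*_j ∩ B(j, 5^{r_j})| ≥ f_j and 5^{r_j - 1}·|C*_j ∩ B(j, 5^{r_j - 1})| < f_j, where {C*_j}_{j∈S} partitions a client set C. Suppose for every client i ∈ C*_j: if d(i,j) ≤ 5^{r_j - 1} then 5^{r_i^area} ≤ 5^{r_j}, and if d(i,j) > 5^{r_j - 1} then 5^{r_i^area} ≤ 5·d(i,j). Then Σ_{i∈C} 5^{r_i^area} ≤ 5·(Σ_{j∈S} f_j + Σ_{i∈C} d(i, j(i))), where j(i) is the unique j with i ∈ C*_j. -/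
/-- combining inequalities (A) and (B):
`Σ_i 5^{r_i^area} ≤ 5·(Σ_j f_j + Σ_i d(i, j(i)))`. -/
theorem stmt_18 {V : Type*} [MetricSpace V]
    (S : Finset V) (C : Finset V) (f : V → ℝ) (rj : V → ℤ)
    (assign : V → V) (rarea : V → ℤ)
    (hfpos : ∀ j ∈ S, 0 < f j)
    (hassign : ∀ i ∈ C, assign i ∈ S)
    -- threshold radius r_j: 5^{r_j}·|C*_j ∩ B(j,5^{r_j})| ≥ f_j and
    -- 5^{r_j-1}·|C*_j ∩ B(j,5^{r_j-1})| < f_j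
    (hthr : ∀ j ∈ S,
      f j ≤ (5 : ℝ) ^ (rj j) *
        ({i ∈ (↑C : Set V) | assign i = j ∧
          dist i j ≤ (5 : ℝ) ^ (rj j)}.ncard : ℝ) ∧
      (5 : ℝ) ^ (rj j - 1) *
        ({i ∈ (↑C : Set V) | assign i = j ∧
          dist i j ≤ (5 : ℝ) ^ (rj j - 1)}.ncard : ℝ) < f j)
    -- pointwise payment bounds for close and far clients
    (hlo : ∀ i ∈ C, dist i (assign i) ≤ (5 : ℝ) ^ (rj (assign i) - 1) →
      (5 : ℝ) ^ (rarea i) ≤ (5 : ℝ) ^ (rj (assign i)))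
    (hhi : ∀ i ∈ C, (5 : ℝ) ^ (rj (assign i) - 1) < dist i (assign i) →
      (5 : ℝ) ^ (rarea i) ≤ 5 * dist i (assign i)) :
    ∑ i ∈ C, (5 : ℝ) ^ (rarea i) ≤
      5 * (∑ j ∈ S, f j + ∑ i ∈ C, dist i (assign i)) := by
  classical
  set P : V → Prop := fun i => dist i (assign i) ≤ (5 : ℝ) ^ (rj (assign i) - 1) with hP
  have hsplit := Finset.sum_filter_add_sum_filter_not C P (fun i => (5 : ℝ) ^ (rarea i))
  have hhiB : ∑ i ∈ C.filter (fun i => ¬ P i), (5 : ℝ) ^ (rarea i)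
      ≤ 5 * ∑ i ∈ C, dist i (assign i) := by
    calc ∑ i ∈ C.filter (fun i => ¬ P i), (5 : ℝ) ^ (rarea i)
        ≤ ∑ i ∈ C.filter (fun i => ¬ P i), 5 * dist i (assign i) := by
          apply Finset.sum_le_sum
          intro i hi
          simp only [Finset.mem_filter] at hi
          exact hhi i hi.1 (lt_of_not_ge hi.2)
      _ ≤ ∑ i ∈ C, 5 * dist i (assign i) := by
          apply Finset.sum_le_sum_of_subset_of_nonneg (Finset.filter_subset _ _)
          intro i _ _
          positivity
      _ = 5 * ∑ i ∈ C, dist i (assign i) := by rw [Finset.mul_sum]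
  have hloB : ∑ i ∈ C.filter P, (5 : ℝ) ^ (rarea i) ≤ 5 * ∑ j ∈ S, f j := by
    have h1 : ∑ i ∈ C.filter P, (5 : ℝ) ^ (rarea i)
        ≤ ∑ i ∈ C.filter P, (5 : ℝ) ^ (rj (assign i)) := by
      apply Finset.sum_le_sum
      intro i hi
      simp only [Finset.mem_filter, hP] at hi
      exact hlo i hi.1 hi.2
    have h2 : ∑ i ∈ C.filter P, (5 : ℝ) ^ (rj (assign i))
        = ∑ j ∈ S, ∑ i ∈ (C.filter P).filter (fun i => assign i = j),
            (5 : ℝ) ^ (rj (assign i)) := by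
      exact (Finset.sum_fiberwise_of_maps_to
        (fun i hi => hassign i (Finset.mem_filter.1 hi).1) _).symm
    have h3 : ∀ j ∈ S, ∑ i ∈ (C.filter P).filter (fun i => assign i = j),
        (5 : ℝ) ^ (rj (assign i)) ≤ 5 * f j := by
      intro j hj
      have hset : (C.filter P).filter (fun i => assign i = j)
          = C.filter (fun i => assign i = j ∧ dist i j ≤ (5 : ℝ) ^ (rj j - 1)) := by
        ext i
        simp only [Finset.mem_filter, hP]
        constructor
        · rintro ⟨⟨hiC, hd⟩, ha⟩
          exact ⟨hiC, ha, by rwa [ha] at hd⟩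
        · rintro ⟨hiC, ha, hd⟩
          exact ⟨⟨hiC, by rwa [ha]⟩, ha⟩
      have hncard : ({i ∈ (↑C : Set V) | assign i = j ∧
          dist i j ≤ (5 : ℝ) ^ (rj j - 1)}.ncard : ℝ)
          = ((C.filter (fun i => assign i = j ∧
              dist i j ≤ (5 : ℝ) ^ (rj j - 1))).card : ℝ) := by
        congr 1
        rw [← Set.ncard_coe_finset]
        congr 1
        ext i
        simp
      have hsum : ∑ i ∈ (C.filter P).filter (fun i => assign i = j),
          (5 : ℝ) ^ (rj (assign i))
          = (5 : ℝ) ^ (rj j) * ((C.filter (fun i => assign i = j ∧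
              dist i j ≤ (5 : ℝ) ^ (rj j - 1))).card : ℝ) := by
        rw [hset]
        rw [Finset.sum_congr rfl (fun i hi => by
          rw [(Finset.mem_filter.1 hi).2.1])]
        rw [Finset.sum_const, nsmul_eq_mul, mul_comm]
      rw [hsum]
      have hpow : (5 : ℝ) ^ (rj j) = 5 * (5 : ℝ) ^ (rj j - 1) := by
        rw [← zpow_one_add₀ (by norm_num : (5:ℝ) ≠ 0)]
        ring_nf
      rw [hpow, mul_assoc]
      have := (hthr j hj).2
      rw [← hncard]
      nlinarith [this]
    calc ∑ i ∈ C.filter P, (5 : ℝ) ^ (rarea i)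
        ≤ ∑ j ∈ S, ∑ i ∈ (C.filter P).filter (fun i => assign i = j),
            (5 : ℝ) ^ (rj (assign i)) := h1.trans_eq h2
      _ ≤ ∑ j ∈ S, 5 * f j := Finset.sum_le_sum h3
      _ = 5 * ∑ j ∈ S, f j := by rw [Finset.mul_sum]
  linarith [hsplit, hhiB, hloB]
end
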